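/- The quotient of Λ(Γ) ⊗ A^{⊗n} by the two-sided ideal generated by the elements G_e ⊗ (a[i] − a[j]), where e = {i,j} ranges over E(Γ) and a over A, is isomorphic as a k-module to ⊕_{S⊆E(Γ)} A^{⊗l(S)}; explicitly, the k-linear map sending the class of G_S ⊗ (a₁⊗…⊗a_n) to G_S ⊗ (b₁⊗…⊗b_{l(S)}), where b_m is the product in A of those a_i with vertex i lying in the m-th connected component of ({1,…,n},S), is a well-defined k-module isomorphism. -/

import Mathlib

/-!
Statement 13. Let `k` be a commutative ring, `A` a commutative `k`-algebra and `Γ` a finite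
simple graph on `{1,…,n}` with linearly ordered edge set.  The quotient of
`Λ(Γ) ⊗ A^{⊗n}` by the two-sided ideal generated by the elements `G_e ⊗ (a[i] − a[j])`
(`e = {i,j}` an edge, `a ∈ A`) is isomorphic as a `k`-module to `⊕_{S ⊆ E(Γ)} A^{⊗l(S)}`;
explicitly, the `k`-linear map sending the class of `G_S ⊗ (a₁ ⊗ … ⊗ a_n)` to
`G_S ⊗ (b₁ ⊗ … ⊗ b_{l(S)})`, where `b_m` is the product of the `a_i` over the `m`-th
connected component of `({1,…,n}, S)` (components ordered by their least vertex), is a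
well-defined `k`-module isomorphism.
-/

open scoped TensorProduct

noncomputable section

open scoped Classical

variable (k A : Type) [CommRing k] [CommRing A] [Algebra k A] {n : ℕ}

/-- The `n`-th tensor power `A^{⊗n}` of `A`, as a `k`-algebra. -/
abbrev TPow (n : ℕ) : Type := ⨂[k] (_ : Fin n), A

/-- The exterior algebra `Λ(Γ)` on the edges of a simple graph `Γ`. -/
abbrev GraphExt {V : Type} (Γ : SimpleGraph V) : Type := ExteriorAlgebra k (↥Γ.edgeSet → k)

/-- `a[i] = 1 ⊗ ⋯ ⊗ a ⊗ ⋯ ⊗ 1 ∈ A^{⊗n}` with `a` in the `i`-th position. -/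
def elemAt (i : Fin n) (a : A) : TPow k A n :=
  PiTensorProduct.tprod k (Function.update (fun _ => (1 : A)) i a)

variable {V : Type} [DecidableEq V]

/-- The generator `G_e` of `Λ(Γ)` corresponding to an edge `e` of `Γ`. -/
def gen (Γ : SimpleGraph V) (e : ↥Γ.edgeSet) : GraphExt k Γ :=
  ExteriorAlgebra.ι k (Pi.single e 1)

/-- `G_S`: the exterior product of the generators of the edges of `S` in the fixed order. -/
def edgeMonomial (Γ : SimpleGraph V) [LinearOrder ↥Γ.edgeSet] (S : Finset ↥Γ.edgeSet) :
    GraphExt k Γ :=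
  (List.ofFn fun j : Fin S.card => gen k Γ (S.orderIsoOfFin rfl j : ↥Γ.edgeSet)).prod

/-- Two vertices are related if they are joined by a walk using edges of `S`. -/
def erel (Γ : SimpleGraph (Fin n)) (S : Finset ↥Γ.edgeSet) (x y : Fin n) : Prop :=
  Relation.ReflTransGen (fun u v => ∃ e ∈ S, (e : Sym2 (Fin n)) = s(u, v)) x y

/-- `i` is the least vertex of its connected component of `({1,…,n}, S)`. -/
def isRep (Γ : SimpleGraph (Fin n)) (S : Finset ↥Γ.edgeSet) (i : Fin n) : Prop :=
  ∀ j : Fin n, erel Γ S i j → i ≤ j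

/-- The set of least vertices of the connected components of `({1,…,n}, S)`. -/
def reps (Γ : SimpleGraph (Fin n)) (S : Finset ↥Γ.edgeSet) : Finset (Fin n) :=
  Finset.univ.filter (isRep Γ S)

/-- `l(S)`: the number of connected components of `({1,…,n}, S)`. -/
def lS (Γ : SimpleGraph (Fin n)) (S : Finset ↥Γ.edgeSet) : ℕ := (reps Γ S).card

/-- The least vertex of the `m`-th connected component (components ordered by least
vertex). -/
def repfun (Γ : SimpleGraph (Fin n)) (S : Finset ↥Γ.edgeSet) (m : Fin (lS Γ S)) : Fin n :=
  ((reps Γ S).orderIsoOfFin rfl m : Fin n)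

/-- `b_m`: the product of the `a_i` over the `m`-th connected component of
`({1,…,n}, S)`. -/
def bval (Γ : SimpleGraph (Fin n)) (S : Finset ↥Γ.edgeSet) (a : Fin n → A)
    (m : Fin (lS Γ S)) : A :=
  ∏ i ∈ Finset.univ.filter (fun i => erel Γ S (repfun Γ S m) i), a i

/-- The two-sided ideal of `Λ(Γ) ⊗ A^{⊗n}` generated by the elements
`G_e ⊗ (a[i] − a[j])` for `e = {i,j} ∈ E(Γ)` and `a ∈ A`, realized as the `k`-span of
the products `p * (G_e ⊗ (a[i] − a[j])) * q`. -/
def relIdeal (Γ : SimpleGraph (Fin n)) : Submodule k (GraphExt k Γ ⊗[k] TPow k A n) :=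
  Submodule.span k
    {z | ∃ (p q : GraphExt k Γ ⊗[k] TPow k A n) (e : ↥Γ.edgeSet) (i j : Fin n) (a : A),
      (e : Sym2 (Fin n)) = s(i, j) ∧
      z = p * (gen k Γ e ⊗ₜ[k] (elemAt k A i a - elemAt k A j a)) * q}

/-- `⊕_{S ⊆ E(Γ)} A^{⊗ l(S)}`. -/
abbrev BSTarget (Γ : SimpleGraph (Fin n)) : Type :=
  DirectSum (Finset ↥Γ.edgeSet) fun S => ⨂[k] (_ : Fin (lS Γ S)), A

/-!
Expanding `Λ(Γ)` in its monomial basis `G_S` splits `Λ(Γ) ⊗ A^{⊗n}` as `⊕_S G_S ⊗ A^{⊗n}`.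
A relation `p (G_e ⊗ (a[i] − a[j])) q` only has components at monomials `G_U` with `e ∈ U`, and
there the collapsed tensor factors at `i` and `j` coincide; conversely, for `e ∈ S` the element
`G_S ⊗ (a[i] − a[j])` is `±(G_e ⊗ (a[i] − a[j])) (G_{S∖e} ⊗ 1)`. Hence the summand at `G_S` of
the quotient is `A^{⊗n}` modulo the ideal generated by `a[i] − a[j]` for `{i,j} ∈ S`, and
multiplying the tensor factors along each connected component of `S` identifies it with
`A^{⊗l(S)}`; the inverse places `b_m` at the least vertex of the `m`-th component.
-/

namespace Module.Basis

variable {R M I : Type*} [CommRing R] [AddCommGroup M] [Module R M] [LinearOrder I]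
  (b : Basis I R M)

theorem exteriorAlgebra_apply_eq_prod (s : Finset I) :
    b.ExteriorAlgebra s =
      (List.ofFn fun j : Fin s.card => ExteriorAlgebra.ι R (b (s.orderIsoOfFin rfl j))).prod := by
  rw [ExteriorAlgebra.basis_apply_ofCard b rfl]
  rfl

theorem exteriorAlgebra_singleton (i : I) : b.ExteriorAlgebra {i} = ExteriorAlgebra.ι R (b i) := by
  simp only [exteriorAlgebra_apply_eq_prod, Finset.card_singleton, List.ofFn_succ,
    List.ofFn_zero, List.prod_cons, List.prod_nil, mul_one]
  congr 2
  exact Finset.mem_singleton.1 (Subtype.mem _)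

theorem exteriorAlgebra_mul_of_disjoint [DecidableEq I] {s t : Finset I} (h : Disjoint s t) :
    ∃ σ : ℤˣ, b.ExteriorAlgebra s * b.ExteriorAlgebra t = σ • b.ExteriorAlgebra (s ∪ t) := by
  let s' : Set.powersetCard I s.card := Set.powersetCard.ofCard rfl
  let t' : Set.powersetCard I t.card := Set.powersetCard.ofCard rfl
  have hunion : ((Set.powersetCard.disjUnion (s := s') (t := t') h : Set.powersetCard I _) :
      Finset I) = s ∪ t :=
    Finset.disjUnion_eq_union s t h
  exact ⟨_, hunion ▸ ExteriorAlgebra.basis_mul_of_disjoint b s' t' h⟩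

theorem exteriorAlgebra_mul [DecidableEq I] (s t : Finset I) :
    ∃ c : R, b.ExteriorAlgebra s * b.ExteriorAlgebra t = c • b.ExteriorAlgebra (s ∪ t) := by
  by_cases h : Disjoint s t
  · obtain ⟨σ, hσ⟩ := b.exteriorAlgebra_mul_of_disjoint h
    exact ⟨(σ : ℤ), by rw [hσ, Units.smul_def, Int.cast_smul_eq_zsmul]⟩
  · refine ⟨0, ?_⟩
    simpa using ExteriorAlgebra.basis_mul_of_not_disjoint b
      (Set.powersetCard.ofCard (rfl : s.card = _)) (Set.powersetCard.ofCard (rfl : t.card = _)) h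

theorem mul_ι_mul_mem_span_exteriorAlgebra (i : I) (x y : _root_.ExteriorAlgebra R M) :
    x * ExteriorAlgebra.ι R (b i) * y ∈
      Submodule.span R (b.ExteriorAlgebra '' {U | i ∈ U}) := by
  have hbasis : ∀ s t, b.ExteriorAlgebra s * ExteriorAlgebra.ι R (b i) * b.ExteriorAlgebra t ∈
      Submodule.span R (b.ExteriorAlgebra '' {U | i ∈ U}) := by
    intro s t
    obtain ⟨c, hc⟩ := b.exteriorAlgebra_mul s {i}
    obtain ⟨c', hc'⟩ := b.exteriorAlgebra_mul (s ∪ {i}) t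
    rw [← exteriorAlgebra_singleton, hc, smul_mul_assoc, hc', smul_smul]
    exact Submodule.smul_mem _ _ (Submodule.subset_span ⟨_, by simp, rfl⟩)
  rw [← b.ExteriorAlgebra.linearCombination_repr x, ← b.ExteriorAlgebra.linearCombination_repr y,
    Finsupp.linearCombination_apply, Finsupp.linearCombination_apply, Finsupp.sum_mul,
    Finsupp.sum_mul]
  refine Submodule.finsuppSum_mem _ _ _ _ fun s _ => ?_
  rw [Finsupp.mul_sum]
  refine Submodule.finsuppSum_mem _ _ _ _ fun t _ => ?_
  rw [smul_mul_assoc, smul_mul_assoc, mul_smul_comm]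
  exact Submodule.smul_mem _ _ (Submodule.smul_mem _ _ (hbasis s t))

end Module.Basis

section TensorPowMap

open PiTensorProduct

variable {k A} {ι κ : Type*} [Fintype ι] [DecidableEq κ]

def tensorPowMap (f : ι → κ) : (⨂[k] _ : ι, A) →ₐ[k] ⨂[k] _ : κ, A :=
  liftAlgHom ((MultilinearMap.mkPiAlgebra k ι _).compLinearMap fun i =>
      (singleAlgHom (R := k) (A := fun _ : κ => A) (f i)).toLinearMap)
    (by
      simp only [MultilinearMap.compLinearMap_apply, MultilinearMap.mkPiAlgebra_apply,
        AlgHom.toLinearMap_apply, Pi.one_apply, map_one, Finset.prod_const_one])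
    (fun x y => by
      simp only [MultilinearMap.compLinearMap_apply, MultilinearMap.mkPiAlgebra_apply,
        AlgHom.toLinearMap_apply, Pi.mul_apply, map_mul, Finset.prod_mul_distrib])

theorem tensorPowMap_tprod (f : ι → κ) (a : ι → A) :
    tensorPowMap f (tprod k a) = ∏ i, singleAlgHom (R := k) (A := fun _ : κ => A) (f i) (a i) := by
  change lift _ (tprod k a) = _
  rw [lift.tprod]
  rfl

theorem tensorPowMap_tprod_eq_tprod_prod (f : ι → κ) (a : ι → A) :
    tensorPowMap f (tprod k a) = tprod k fun j => ∏ i ∈ Finset.univ.filter (f · = j), a i := by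
  rw [tensorPowMap_tprod]
  simp only [singleAlgHom_apply, MonoidHom.mulSingle_apply, ← tprod_prod]
  congr 1
  funext j
  rw [Finset.prod_apply, Finset.prod_filter]
  exact Finset.prod_congr rfl fun i _ => by by_cases h : f i = j <;> simp [h]

theorem tensorPowMap_comp_singleAlgHom [DecidableEq ι] (f : ι → κ) (i : ι) :
    (tensorPowMap f).comp (singleAlgHom (R := k) (A := fun _ : ι => A) i) =
      singleAlgHom (R := k) (A := fun _ : κ => A) (f i) := by
  ext a
  rw [AlgHom.comp_apply, singleAlgHom_apply, tensorPowMap_tprod, Finset.prod_eq_single i]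
  · simp
  · intro j _ hj
    simp [hj, ← one_def]
  · simp

theorem tensorPowMap_comp [DecidableEq ι] [Fintype κ] {ν : Type*} [DecidableEq ν]
    (g : κ → ν) (f : ι → κ) :
    (tensorPowMap (k := k) (A := A) g).comp (tensorPowMap f) = tensorPowMap (g ∘ f) := by
  ext i : 1
  rw [AlgHom.comp_assoc, tensorPowMap_comp_singleAlgHom, tensorPowMap_comp_singleAlgHom,
    tensorPowMap_comp_singleAlgHom, Function.comp_apply]

theorem tensorPowMap_id [DecidableEq ι] : tensorPowMap (k := k) (A := A) (id : ι → ι) = .id k _ := by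
  ext i : 1
  rw [tensorPowMap_comp_singleAlgHom, AlgHom.id_comp, id]

theorem elemAt_eq_singleAlgHom (i : Fin n) (a : A) :
    elemAt k A i a = singleAlgHom (R := k) (A := fun _ : Fin n => A) i a := by
  rw [elemAt, singleAlgHom_apply]
  congr 1

theorem tensorPowMap_elemAt {p q : ℕ} (f : Fin p → Fin q) (i : Fin p) (a : A) :
    tensorPowMap f (elemAt k A i a) = elemAt k A (f i) a := by
  rw [elemAt_eq_singleAlgHom, elemAt_eq_singleAlgHom, ← AlgHom.comp_apply,
    tensorPowMap_comp_singleAlgHom]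

end TensorPowMap

section Components

variable (Γ : SimpleGraph (Fin n)) (S : Finset ↥Γ.edgeSet)

theorem erel_symm {i j : Fin n} (h : erel Γ S i j) : erel Γ S j i := by
  induction h with
  | refl => exact .refl
  | tail _ hstep ih =>
    obtain ⟨e, he, hs⟩ := hstep
    exact .head ⟨e, he, hs.trans Sym2.eq_swap⟩ ih

theorem erel_of_mem {e : ↥Γ.edgeSet} {i j : Fin n} (he : e ∈ S)
    (hij : (e : Sym2 (Fin n)) = s(i, j)) : erel Γ S i j :=
  Relation.ReflTransGen.single ⟨e, he, hij⟩

def compMin (i : Fin n) : Fin n :=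
  (Finset.univ.filter (erel Γ S · i)).min' ⟨i, by simp [erel, Relation.ReflTransGen.refl]⟩

theorem erel_compMin (i : Fin n) : erel Γ S (compMin Γ S i) i :=
  (Finset.mem_filter.1 (Finset.min'_mem (Finset.univ.filter (erel Γ S · i)) _)).2

theorem compMin_le {i j : Fin n} (h : erel Γ S j i) : compMin Γ S i ≤ j :=
  Finset.min'_le _ j (Finset.mem_filter.2 ⟨Finset.mem_univ j, h⟩)

theorem compMin_eq_of_erel {i j : Fin n} (h : erel Γ S i j) : compMin Γ S i = compMin Γ S j :=
  le_antisymm (compMin_le Γ S ((erel_compMin Γ S j).trans (erel_symm Γ S h)))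
    (compMin_le Γ S ((erel_compMin Γ S i).trans h))

theorem compMin_eq_self {r : Fin n} (h : isRep Γ S r) : compMin Γ S r = r :=
  le_antisymm (compMin_le Γ S .refl) (h _ (erel_symm Γ S (erel_compMin Γ S r)))

theorem compMin_mem_reps (i : Fin n) : compMin Γ S i ∈ reps Γ S :=
  Finset.mem_filter.2 ⟨Finset.mem_univ _, fun _ hj =>
    compMin_le Γ S ((erel_symm Γ S hj).trans (erel_compMin Γ S i))⟩

theorem isRep_repfun (m : Fin (lS Γ S)) : isRep Γ S (repfun Γ S m) :=
  (Finset.mem_filter.1 ((reps Γ S).orderIsoOfFin rfl m).2).2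

def compIdx (i : Fin n) : Fin (lS Γ S) :=
  ((reps Γ S).orderIsoOfFin rfl).symm ⟨compMin Γ S i, compMin_mem_reps Γ S i⟩

theorem repfun_compIdx (i : Fin n) : repfun Γ S (compIdx Γ S i) = compMin Γ S i := by
  rw [repfun, compIdx, OrderIso.apply_symm_apply]

theorem compIdx_repfun (m : Fin (lS Γ S)) : compIdx Γ S (repfun Γ S m) = m := by
  have h : (⟨compMin Γ S (repfun Γ S m), compMin_mem_reps Γ S _⟩ : ↥(reps Γ S)) =
      (reps Γ S).orderIsoOfFin rfl m :=
    Subtype.ext (compMin_eq_self Γ S (isRep_repfun Γ S m))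
  rw [compIdx, h]
  exact OrderIso.symm_apply_apply _ _

theorem erel_repfun_compIdx (i : Fin n) : erel Γ S (repfun Γ S (compIdx Γ S i)) i := by
  rw [repfun_compIdx]
  exact erel_compMin Γ S i

theorem compIdx_eq_of_erel {i j : Fin n} (h : erel Γ S i j) : compIdx Γ S i = compIdx Γ S j := by
  rw [compIdx, compIdx]
  congr 1
  exact Subtype.ext (compMin_eq_of_erel Γ S h)

theorem compIdx_eq_iff (i : Fin n) (m : Fin (lS Γ S)) :
    compIdx Γ S i = m ↔ erel Γ S (repfun Γ S m) i := by
  refine ⟨fun h => h ▸ erel_repfun_compIdx Γ S i, fun h => ?_⟩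
  rw [← compIdx_eq_of_erel Γ S h, compIdx_repfun]

theorem compIdx_comp_repfun : compIdx Γ S ∘ repfun Γ S = id :=
  funext (compIdx_repfun Γ S)

end Components

section Quotient

open Module PiTensorProduct

variable (Γ : SimpleGraph (Fin n))

theorem mul_mem_relIdeal (x : GraphExt k Γ ⊗[k] TPow k A n) {z : GraphExt k Γ ⊗[k] TPow k A n}
    (hz : z ∈ relIdeal k A Γ) : x * z ∈ relIdeal k A Γ := by
  induction hz using Submodule.span_induction with
  | mem z hz =>
    obtain ⟨p, q, e, i, j, a, hij, rfl⟩ := hz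
    exact Submodule.subset_span ⟨x * p, q, e, i, j, a, hij, by simp only [mul_assoc]⟩
  | zero => rw [mul_zero]; exact zero_mem _
  | add z z' _ _ hz hz' => rw [mul_add]; exact add_mem hz hz'
  | smul c z _ hz => rw [mul_smul_comm]; exact Submodule.smul_mem _ c hz

variable [LinearOrder ↥Γ.edgeSet]

abbrev edgeBasis : Basis (Finset ↥Γ.edgeSet) k (GraphExt k Γ) :=
  (Pi.basisFun k ↥Γ.edgeSet).ExteriorAlgebra

theorem edgeBasis_apply (S : Finset ↥Γ.edgeSet) : edgeBasis k Γ S = edgeMonomial k Γ S := by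
  simp [Basis.exteriorAlgebra_apply_eq_prod, edgeMonomial, gen]

theorem gen_eq_edgeBasis (e : ↥Γ.edgeSet) : gen k Γ e = edgeBasis k Γ {e} := by
  rw [Basis.exteriorAlgebra_singleton, Pi.basisFun_apply, gen]

theorem gen_mul_edgeMonomial_erase {S : Finset ↥Γ.edgeSet} {e : ↥Γ.edgeSet} (he : e ∈ S) :
    ∃ σ : ℤˣ, gen k Γ e * edgeMonomial k Γ (S.erase e) = σ • edgeMonomial k Γ S := by
  rw [gen_eq_edgeBasis, ← edgeBasis_apply, ← edgeBasis_apply]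
  obtain ⟨σ, hσ⟩ := (Pi.basisFun k ↥Γ.edgeSet).exteriorAlgebra_mul_of_disjoint
    (Finset.disjoint_singleton_left.2 (Finset.notMem_erase e S))
  have hS : {e} ∪ S.erase e = S := Finset.ext fun x => by by_cases h : x = e <;> simp [h, he]
  rw [hS] at hσ
  exact ⟨σ, hσ⟩

theorem mul_gen_mul_mem_span (e : ↥Γ.edgeSet) (x y : GraphExt k Γ) :
    x * gen k Γ e * y ∈ Submodule.span k (edgeMonomial k Γ '' {U | e ∈ U}) := by
  have h := (Pi.basisFun k ↥Γ.edgeSet).mul_ι_mul_mem_span_exteriorAlgebra e x y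
  rwa [show ⇑(edgeBasis k Γ) = edgeMonomial k Γ from funext (edgeBasis_apply k Γ),
    Pi.basisFun_apply] at h

def relIdealAt (S : Finset ↥Γ.edgeSet) : Ideal (TPow k A n) where
  carrier := {x | edgeMonomial k Γ S ⊗ₜ[k] x ∈ relIdeal k A Γ}
  add_mem' hx hy := by
    simpa only [Set.mem_ofPred_eq, TensorProduct.tmul_add] using add_mem hx hy
  zero_mem' := by simp only [Set.mem_ofPred_eq, TensorProduct.tmul_zero, zero_mem]
  smul_mem' c x hx := by
    have h := mul_mem_relIdeal k A Γ (1 ⊗ₜ c) hx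
    rwa [Algebra.TensorProduct.tmul_mul_tmul, one_mul] at h

theorem sub_mem_relIdealAt {S : Finset ↥Γ.edgeSet} {e : ↥Γ.edgeSet} (he : e ∈ S) {i j : Fin n}
    (hij : (e : Sym2 (Fin n)) = s(i, j)) (a : A) :
    elemAt k A i a - elemAt k A j a ∈ relIdealAt k A Γ S := by
  obtain ⟨σ, hσ⟩ := gen_mul_edgeMonomial_erase k Γ he
  have hgen : 1 * (gen k Γ e ⊗ₜ[k] (elemAt k A i a - elemAt k A j a)) *
      (edgeMonomial k Γ (S.erase e) ⊗ₜ[k] 1) ∈ relIdeal k A Γ :=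
    Submodule.subset_span ⟨1, _, e, i, j, a, hij, rfl⟩
  rw [one_mul, Algebra.TensorProduct.tmul_mul_tmul, mul_one, hσ,
    ← TensorProduct.smul_tmul'] at hgen
  exact (Submodule.smul_mem_iff' (relIdeal k A Γ) σ).1 hgen

theorem mk_elemAt_eq_of_erel {S : Finset ↥Γ.edgeSet} {i j : Fin n} (h : erel Γ S i j) (a : A) :
    Ideal.Quotient.mk (relIdealAt k A Γ S) (elemAt k A i a) =
      Ideal.Quotient.mk (relIdealAt k A Γ S) (elemAt k A j a) := by
  induction h with
  | refl => rfl
  | tail _ hstep ih =>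
    obtain ⟨e, he, hs⟩ := hstep
    rw [ih, Ideal.Quotient.eq]
    exact sub_mem_relIdealAt k A Γ he hs a

theorem mkₐ_comp_tensorPowMap_compIdx (S : Finset ↥Γ.edgeSet) :
    (Ideal.Quotient.mkₐ k (relIdealAt k A Γ S)).comp (tensorPowMap (repfun Γ S ∘ compIdx Γ S)) =
      Ideal.Quotient.mkₐ k (relIdealAt k A Γ S) := by
  ext i a
  simp only [AlgHom.comp_apply, Ideal.Quotient.mkₐ_eq_mk, ← elemAt_eq_singleAlgHom,
    tensorPowMap_elemAt, Function.comp_apply]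
  exact mk_elemAt_eq_of_erel k A Γ (erel_repfun_compIdx Γ S i) a

theorem tmul_tensorPowMap_compIdx_sub_mem (S : Finset ↥Γ.edgeSet) (y : TPow k A n) :
    edgeMonomial k Γ S ⊗ₜ[k] (tensorPowMap (repfun Γ S) (tensorPowMap (compIdx Γ S) y) - y) ∈
      relIdeal k A Γ := by
  change _ ∈ relIdealAt k A Γ S
  rw [← Ideal.Quotient.eq, ← AlgHom.comp_apply, tensorPowMap_comp, ← Ideal.Quotient.mkₐ_eq_mk k,
    ← AlgHom.comp_apply, mkₐ_comp_tensorPowMap_compIdx, Ideal.Quotient.mkₐ_eq_mk]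

def collapse : GraphExt k Γ ⊗[k] TPow k A n →ₗ[k] BSTarget k A Γ :=
  TensorProduct.lift <| (edgeBasis k Γ).constr k fun S =>
    DirectSum.lof k _ (fun T => ⨂[k] (_ : Fin (lS Γ T)), A) S ∘ₗ
      (tensorPowMap (compIdx Γ S)).toLinearMap

theorem collapse_tmul (S : Finset ↥Γ.edgeSet) (y : TPow k A n) :
    collapse k A Γ (edgeMonomial k Γ S ⊗ₜ[k] y) =
      DirectSum.of _ S (tensorPowMap (compIdx Γ S) y) := by
  rw [collapse, TensorProduct.lift.tmul, ← edgeBasis_apply, Basis.constr_basis,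
    LinearMap.comp_apply, DirectSum.lof_eq_of]
  rfl

theorem collapse_tmul_tprod (S : Finset ↥Γ.edgeSet) (a : Fin n → A) :
    collapse k A Γ (edgeMonomial k Γ S ⊗ₜ[k] tprod k a) =
      DirectSum.of _ S (tprod k fun m => bval A Γ S a m) := by
  rw [collapse_tmul, tensorPowMap_tprod_eq_tprod_prod]
  congr
  funext m
  rw [bval]
  congr 1
  ext i
  simp [compIdx_eq_iff]

theorem collapse_tmul_eq_zero {e : ↥Γ.edgeSet} {i j : Fin n} (hij : (e : Sym2 (Fin n)) = s(i, j))
    {z : GraphExt k Γ} (hz : z ∈ Submodule.span k (edgeMonomial k Γ '' {U | e ∈ U}))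
    (a : A) (y y' : TPow k A n) :
    collapse k A Γ (z ⊗ₜ[k] (y * (elemAt k A i a - elemAt k A j a) * y')) = 0 := by
  refine Submodule.span_le (p := LinearMap.ker (collapse k A Γ ∘ₗ
    (TensorProduct.mk k _ _).flip (y * (elemAt k A i a - elemAt k A j a) * y'))).2 ?_ hz
  rintro _ ⟨U, hU, rfl⟩
  rw [SetLike.mem_coe, LinearMap.mem_ker, LinearMap.comp_apply, LinearMap.flip_apply,
    TensorProduct.mk_apply, collapse_tmul, map_mul (tensorPowMap _), map_mul (tensorPowMap _),
    map_sub (tensorPowMap (k := k) (A := A) (compIdx Γ U)), tensorPowMap_elemAt,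
    tensorPowMap_elemAt, compIdx_eq_of_erel Γ U (erel_of_mem Γ U hU hij), sub_self, mul_zero,
    zero_mul, map_zero]

theorem relIdeal_le_ker_collapse : relIdeal k A Γ ≤ LinearMap.ker (collapse k A Γ) := by
  rw [relIdeal, Submodule.span_le]
  rintro _ ⟨p, q, e, i, j, a, hij, rfl⟩
  rw [SetLike.mem_coe, LinearMap.mem_ker]
  induction p using TensorProduct.induction_on with
  | zero => rw [zero_mul, zero_mul, map_zero]
  | add p p' hp hp' => rw [add_mul, add_mul, map_add, hp, hp', add_zero]
  | tmul x y =>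
    induction q using TensorProduct.induction_on with
    | zero => rw [mul_zero, map_zero]
    | add q q' hq hq' => rw [mul_add, map_add, hq, hq', add_zero]
    | tmul x' y' =>
      rw [Algebra.TensorProduct.tmul_mul_tmul, Algebra.TensorProduct.tmul_mul_tmul]
      exact collapse_tmul_eq_zero k A Γ hij (mul_gen_mul_mem_span k Γ e x x') a y y'

def expand : BSTarget k A Γ →ₗ[k] GraphExt k Γ ⊗[k] TPow k A n ⧸ relIdeal k A Γ :=
  DirectSum.toModule k _ _ fun S => (relIdeal k A Γ).mkQ ∘ₗ
    TensorProduct.mk k _ _ (edgeMonomial k Γ S) ∘ₗ (tensorPowMap (repfun Γ S)).toLinearMap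

theorem expand_of (S : Finset ↥Γ.edgeSet) (x : ⨂[k] (_ : Fin (lS Γ S)), A) :
    expand k A Γ (DirectSum.of _ S x) =
      Submodule.Quotient.mk (edgeMonomial k Γ S ⊗ₜ[k] tensorPowMap (repfun Γ S) x) := by
  rw [expand, ← DirectSum.lof_eq_of k, DirectSum.toModule_lof]
  rfl

theorem liftQ_collapse_comp_expand :
    (relIdeal k A Γ).liftQ _ (relIdeal_le_ker_collapse k A Γ) ∘ₗ expand k A Γ = .id := by
  refine DirectSum.linearMap_ext k fun S => LinearMap.ext fun x => ?_
  rw [LinearMap.comp_apply, LinearMap.comp_apply, DirectSum.lof_eq_of, expand_of,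
    Submodule.liftQ_apply, collapse_tmul, ← AlgHom.comp_apply, tensorPowMap_comp,
    compIdx_comp_repfun, tensorPowMap_id]
  rfl

theorem expand_comp_liftQ_collapse :
    expand k A Γ ∘ₗ (relIdeal k A Γ).liftQ _ (relIdeal_le_ker_collapse k A Γ) = .id := by
  refine Submodule.linearMap_qext _ (TensorProduct.ext ((edgeBasis k Γ).ext fun S =>
    LinearMap.ext fun y => ?_))
  rw [edgeBasis_apply]
  simp only [LinearMap.compr₂ₛₗ_apply, TensorProduct.mk_apply, LinearMap.comp_apply,
    Submodule.mkQ_apply, Submodule.liftQ_apply, collapse_tmul, expand_of, LinearMap.id_apply]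
  rw [Submodule.Quotient.eq, ← TensorProduct.tmul_sub]
  exact tmul_tensorPowMap_compIdx_sub_mem k A Γ S y

def quotientEquiv : (GraphExt k Γ ⊗[k] TPow k A n ⧸ relIdeal k A Γ) ≃ₗ[k] BSTarget k A Γ :=
  .ofLinearMap _ _ (liftQ_collapse_comp_expand k A Γ) (expand_comp_liftQ_collapse k A Γ)

theorem quotientEquiv_mk (z : GraphExt k Γ ⊗[k] TPow k A n) :
    quotientEquiv k A Γ (Submodule.Quotient.mk z) = collapse k A Γ z :=
  Submodule.liftQ_apply _ _ _

end Quotient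

theorem quotient_iso_directSum_tensorPowers
    (Γ : SimpleGraph (Fin n)) [LinearOrder ↥Γ.edgeSet] :
    ∃ φ : (GraphExt k Γ ⊗[k] TPow k A n ⧸ relIdeal k A Γ) →ₗ[k] BSTarget k A Γ,
      (∀ (S : Finset ↥Γ.edgeSet) (a : Fin n → A),
        φ (Submodule.Quotient.mk (edgeMonomial k Γ S ⊗ₜ[k] PiTensorProduct.tprod k a)) =
          DirectSum.of _ S (PiTensorProduct.tprod k fun m => bval A Γ S a m)) ∧
      Function.Bijective φ :=
  ⟨quotientEquiv k A Γ, fun S a => by rw [LinearEquiv.coe_coe, quotientEquiv_mk,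
    collapse_tmul_tprod], (quotientEquiv k A Γ).bijective⟩

end
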